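/- Let $\olmu < 0$, $\olM, \delta, h > 0$, $p \ge 1$ an integer, $m \ge 1$ an integer, and $\olh = h/m$. If $\olh \le \min\left\{\left(\frac{\olmu\,\delta}{2\olM(e^{\olmu h}-1)}\right)^{1/p},\, -\frac{1}{\olmu}\right\}$, then $\olM\,\olh^{p+1}\cdot\frac{e^{m\olmu\olh}-1}{e^{\olmu\olh}-1} \le \delta$. -/

import Mathlib

/-!
Since `μ h̄ ∈ [-1, 0)`, the elementary bound `1 - e^x ≥ -x/2` on `[-1, 0]` controls the geometric
ratio: `(e^{μh} - 1)/(e^{μh̄} - 1) ≤ 2(e^{μh} - 1)/(μ h̄)`. The left-hand side is then at most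
`h̄^p · 2M(e^{μh} - 1)/μ`, and the first term of the minimum makes this at most `δ`.
-/

open Real

lemma neg_half_le_one_sub_exp {x : ℝ} (hx₁ : -1 ≤ x) (hx₀ : x ≤ 0) : -x / 2 ≤ 1 - exp x := by
  -- `e^x (1 - x) ≤ e^x e^{-x} = 1`, i.e. `e^x ≤ 1/(1 - x)`, and `1/(1 - x) ≤ 1 + x/2` on `[-1, 0]`
  have hmul : exp x * (1 - x) ≤ 1 := by
    calc exp x * (1 - x) ≤ exp x * exp (-x) := by
          gcongr; linarith [add_one_le_exp (-x)]
      _ = 1 := by rw [← exp_add, add_neg_cancel, exp_zero]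
  nlinarith [exp_pos x]

lemma div_exp_sub_one_le {x c : ℝ} (hx₁ : -1 ≤ x) (hx₀ : x < 0) (hc : c ≤ 0) :
    c / (exp x - 1) ≤ 2 * c / x := by
  have hgap := neg_half_le_one_sub_exp hx₁ hx₀.le
  calc c / (exp x - 1) = -c / (1 - exp x) := by rw [← neg_div_neg_eq, neg_sub]
    _ ≤ -c / (-x / 2) := by gcongr <;> linarith
    _ = 2 * c / x := by field_simp

lemma pow_le_of_le_rpow_one_div {x y : ℝ} {p : ℕ} (hx : 0 ≤ x) (hy : 0 ≤ y) (hp : p ≠ 0)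
    (hxy : x ≤ y ^ ((1 : ℝ) / p)) : x ^ p ≤ y := by
  rwa [one_div, le_rpow_inv_iff_of_pos hx hy (by positivity), rpow_natCast] at hxy

theorem stmt14 (μ M δ h : ℝ) (p m : ℕ) (hμ : μ < 0) (hM : 0 < M) (hδ : 0 < δ)
    (hh : 0 < h) (hp : 1 ≤ p) (hm : 1 ≤ m) (hbar : ℝ) (hhbar : hbar = h / m)
    (hle : hbar ≤ min ((μ * δ / (2 * M * (Real.exp (μ * h) - 1))) ^ ((1 : ℝ) / p)) (-1 / μ)) :
    M * hbar ^ (p + 1) * ((Real.exp (m * (μ * hbar)) - 1) / (Real.exp (μ * hbar) - 1)) ≤ δ := by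
  obtain ⟨hle_root, hle_inv⟩ := le_min_iff.mp hle
  have hbar_pos : 0 < hbar := by rw [hhbar]; positivity
  have hmh : (m : ℝ) * (μ * hbar) = μ * h := by
    rw [hhbar]; field_simp
  have hμhbar : -1 ≤ μ * hbar := by
    rw [le_div_iff_of_neg hμ] at hle_inv; linarith
  have hE : exp (μ * h) - 1 < 0 := by
    rw [sub_neg, exp_lt_one_iff]; nlinarith
  have hcoef : 0 < 2 * M * (exp (μ * h) - 1) / μ := div_pos_of_neg_of_neg (by nlinarith) hμ
  have hpow : hbar ^ p ≤ μ * δ / (2 * M * (exp (μ * h) - 1)) :=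
    pow_le_of_le_rpow_one_div hbar_pos.le (div_pos_of_neg_of_neg (by nlinarith) (by nlinarith)).le
      (by omega) hle_root
  calc M * hbar ^ (p + 1) * ((exp (m * (μ * hbar)) - 1) / (exp (μ * hbar) - 1))
      ≤ M * hbar ^ (p + 1) * (2 * (exp (μ * h) - 1) / (μ * hbar)) := by
        rw [hmh]
        exact mul_le_mul_of_nonneg_left (div_exp_sub_one_le hμhbar (by nlinarith) hE.le)
          (by positivity)
    _ = 2 * M * (exp (μ * h) - 1) / μ * hbar ^ p := by
        field_simp
        ring
    _ ≤ 2 * M * (exp (μ * h) - 1) / μ * (μ * δ / (2 * M * (exp (μ * h) - 1))) := by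
        gcongr
    _ = δ := by
        field_simp [hμ.ne, hE.ne]
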